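/- arXiv:2208.14153 — 3 statements merged into one kernel-verified Lean document; each statement's English description precedes it below -/
import Mathlib

section
/- Let X and U be nonempty sets, let k be a positive integer, and let h, ĥ : X → ℝᵏ, r, r̂ : X → ℝ, η, η̂ : U → ℝᵏ, and ζ, ζ̂ : U → ℝ be functions such that for all x ∈ X and all u ∈ U: r(x) + ⟨h(x), η(u)⟩ + ζ(u) = r̂(x) + ⟨ĥ(x), η̂(u)⟩ + ζ̂(u). Suppose there exist k+1 points u₀, u₁, …, u_k ∈ U such that the k×k matrix L whose l-th column is η(u_l) − η(u₀) (for l = 1, …, k) is invertible. Then there exist a k×k real matrix A and a vector c ∈ ℝᵏ such that h(x) = A ĥ(x) + c for all x ∈ X; one may take A = (Lᵀ)⁻¹ L̂ᵀ where L̂ is the matrix with columns η̂(u_l) − η̂(u₀). -/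
open Matrix

/-- If `r(x) + ⟨h(x), η(u)⟩ + ζ(u) = rhat(x) + ⟨hhat(x), ηhat(u)⟩ + ζhat(u)` for all `x` and
`u`, and there are `k+1` points `u 0, …, u k` such that the matrix `L` with columns
`η(u l) − η(u 0)` is invertible, then `h(x) = A hhat(x) + c` for all `x`, with
`A = (Lᵀ)⁻¹ Lhatᵀ`, where `Lhat` has columns `ηhat(u l) − ηhat(u 0)`. -/
theorem stmt3 {X U : Type*} [Nonempty X] [Nonempty U] {k : ℕ} (hk : 0 < k)
    (h hhat : X → Fin k → ℝ) (r rhat : X → ℝ) (η ηhat : U → Fin k → ℝ) (ζ ζhat : U → ℝ)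
    (heq : ∀ (x : X) (u : U),
      r x + h x ⬝ᵥ η u + ζ u = rhat x + hhat x ⬝ᵥ ηhat u + ζhat u)
    (u : Fin (k + 1) → U)
    (L Lhat : Matrix (Fin k) (Fin k) ℝ)
    (hL : ∀ i l : Fin k, L i l = η (u l.succ) i - η (u 0) i)
    (hLhat : ∀ i l : Fin k, Lhat i l = ηhat (u l.succ) i - ηhat (u 0) i)
    (hLinv : IsUnit L) :
    ∃ c : Fin k → ℝ, ∀ x : X, h x = (L.transpose⁻¹ * Lhat.transpose).mulVec (hhat x) + c := by
  classical
  set d : Fin k → ℝ := fun l =>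
    (ζhat (u l.succ) - ζhat (u 0)) - (ζ (u l.succ) - ζ (u 0)) with hd
  refine ⟨(L.transpose⁻¹).mulVec d, fun x => ?_⟩
  have key : ∀ l : Fin k,
      (∑ i, (η (u l.succ) i - η (u 0) i) * h x i)
        = (∑ i, (ηhat (u l.succ) i - ηhat (u 0) i) * hhat x i) + d l := by
    intro l
    have e1 := heq x (u l.succ)
    have e2 := heq x (u 0)
    simp only [dotProduct] at e1 e2
    have A1 : (∑ i, (η (u l.succ) i - η (u 0) i) * h x i)
        = (∑ i, h x i * η (u l.succ) i) - (∑ i, h x i * η (u 0) i) := by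
      rw [← Finset.sum_sub_distrib]
      exact Finset.sum_congr rfl fun i _ => by ring
    have A2 : (∑ i, (ηhat (u l.succ) i - ηhat (u 0) i) * hhat x i)
        = (∑ i, hhat x i * ηhat (u l.succ) i) - (∑ i, hhat x i * ηhat (u 0) i) := by
      rw [← Finset.sum_sub_distrib]
      exact Finset.sum_congr rfl fun i _ => by ring
    rw [A1, A2, hd]; dsimp only
    linarith [e1, e2]
  have hx : L.transpose.mulVec (h x) = Lhat.transpose.mulVec (hhat x) + d := by
    funext l
    simp only [Matrix.mulVec, dotProduct, Matrix.transpose_apply, Pi.add_apply]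
    calc (∑ i, L i l * h x i)
        = ∑ i, (η (u l.succ) i - η (u 0) i) * h x i :=
          Finset.sum_congr rfl fun i _ => by rw [hL]
      _ = (∑ i, (ηhat (u l.succ) i - ηhat (u 0) i) * hhat x i) + d l := key l
      _ = (∑ i, Lhat i l * hhat x i) + d l := by
          congr 1; exact Finset.sum_congr rfl fun i _ => by rw [hLhat]
  have hdet : IsUnit L.transpose.det := by
    rw [Matrix.det_transpose]
    exact (Matrix.isUnit_iff_isUnit_det L).mp hLinv
  calc h x = (L.transpose⁻¹ * L.transpose).mulVec (h x) := by
        rw [Matrix.nonsing_inv_mul _ hdet, Matrix.one_mulVec]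
    _ = L.transpose⁻¹.mulVec (L.transpose.mulVec (h x)) := by
        rw [← Matrix.mulVec_mulVec]
    _ = L.transpose⁻¹.mulVec (Lhat.transpose.mulVec (hhat x) + d) := by rw [hx]
    _ = (L.transpose⁻¹ * Lhat.transpose).mulVec (hhat x) + L.transpose⁻¹.mulVec d := by
        rw [Matrix.mulVec_add, Matrix.mulVec_mulVec]
end

section
/- Let n be a positive integer and let q : ℝⁿ → ℝ be given by q(x) = Σ_j a_j x_j + Σ_j b_j x_j² + Σ_{j<k} c_{jk} x_j x_k + d for real coefficients a_j, b_j, c_{jk}, d. Suppose there exist real coefficients a'_j, b'_j, c'_{jk}, d' such that for every x ∈ ℝⁿ, q(x)² = Σ_j a'_j x_j + Σ_j b'_j x_j² + Σ_{j<k} c'_{jk} x_j x_k + d'. Then b_j = 0 for all j and c_{jk} = 0 for all j < k; hence q is an affine function of x. -/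
open Finset

/-- A general inhomogeneous quadratic polynomial on `ℝⁿ` with linear coefficients `a`,
square coefficients `b`, cross-term coefficients `c` (for `j < k`), and constant `d`. -/
noncomputable def quadPoly {n : ℕ} (a b : Fin n → ℝ) (c : Fin n → Fin n → ℝ) (d : ℝ)
    (x : Fin n → ℝ) : ℝ :=
  (∑ j, a j * x j) + (∑ j, b j * x j ^ 2) +
    (∑ j, ∑ k, if j < k then c j k * x j * x k else 0) + d

lemma single_eval {n : ℕ} (a b : Fin n → ℝ) (c : Fin n → Fin n → ℝ) (d : ℝ) (j : Fin n) (t : ℝ) :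
    quadPoly a b c d (fun i => if i = j then t else 0) = a j * t + b j * t^2 + d := by
  simp only [quadPoly, mul_ite, ite_mul, apply_ite (· ^ 2), mul_zero, zero_mul,
    ne_eq, zero_pow, Finset.sum_ite_eq', Finset.mem_univ, if_true]
  have : (∑ p : Fin n, ∑ q : Fin n, if p < q then if q = j then if p = j then c p q * t * t else 0 else 0 else 0) = 0 := by
    apply Finset.sum_eq_zero; intro p _; apply Finset.sum_eq_zero; intro q _
    split_ifs with h1 h2 h3 <;> try rfl
    subst h2; subst h3; exact absurd h1 (lt_irrefl _)
  rw [this]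
  simp [Finset.sum_ite_eq', apply_ite (· ^ 2), mul_ite, zero_pow]

lemma pair_eval {n : ℕ} (a b : Fin n → ℝ) (c : Fin n → Fin n → ℝ) (d : ℝ) (j k : Fin n)
    (hjk : j < k) (t : ℝ) :
    quadPoly a b c d (fun i => if i = j then t else if i = k then t else 0) =
      (a j + a k) * t + (b j + b k) * t ^ 2 + c j k * t ^ 2 + d := by
  have hne : j ≠ k := ne_of_lt hjk
  have h1 : ∀ u : Fin n → ℝ, (∑ i, u i * (if i = j then t else if i = k then t else 0)) =
      u j * t + u k * t := by
    intro u
    have e : ∀ i ∈ Finset.univ, u i * (if i = j then t else if i = k then t else 0) =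
        (if i = j then u i * t else 0) + (if i = k then u i * t else 0) := by
      intro i _; split_ifs with ha hb <;> simp_all
    rw [Finset.sum_congr rfl e, Finset.sum_add_distrib, Finset.sum_ite_eq',
      Finset.sum_ite_eq']
    simp
  have h2 : ∀ u : Fin n → ℝ, (∑ i, u i * (if i = j then t else if i = k then t else 0) ^ 2) =
      u j * t ^ 2 + u k * t ^ 2 := by
    intro u
    have e : ∀ i ∈ Finset.univ, u i * (if i = j then t else if i = k then t else 0) ^ 2 =
        (if i = j then u i * t ^ 2 else 0) + (if i = k then u i * t ^ 2 else 0) := by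
      intro i _; split_ifs with ha hb <;> simp_all
    rw [Finset.sum_congr rfl e, Finset.sum_add_distrib, Finset.sum_ite_eq',
      Finset.sum_ite_eq']
    simp
  have h3 : (∑ p, ∑ q, if p < q then c p q * (if p = j then t else if p = k then t else 0) *
      (if q = j then t else if q = k then t else 0) else 0) = c j k * t ^ 2 := by
    have e : ∀ p q : Fin n, (if p < q then c p q * (if p = j then t else if p = k then t else 0) *
        (if q = j then t else if q = k then t else 0) else 0) =
        (if p = j then (if q = k then c j k * t ^ 2 else 0) else 0) := by
      intro p q
      rcases eq_or_ne p j with hp | hp <;> rcases eq_or_ne q k with hq | hq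
      · simp [hp, hq, hjk, hne, hne.symm]; ring
      · rcases eq_or_ne q j with h | h
        · simp [hp, hq, h, hne, hne.symm]
        · simp [hp, hq, h, hne, hne.symm]
      · rcases eq_or_ne p k with h | h
        · simp [hp, hq, h, hne, hne.symm]
        · simp [hp, hq, h, hne.symm]
      · rcases eq_or_ne p k with h | h
        · rcases eq_or_ne q j with h' | h'
          · simp [hp, hq, h, h', lt_asymm hjk, hne, hne.symm]
          · simp [hp, hq, h, h', hne, hne.symm]
        · simp [hp, hq, h, hne, hne.symm]
    rw [Finset.sum_congr rfl fun p _ => Finset.sum_congr rfl fun q _ => e p q]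
    have e1 : ∀ p ∈ Finset.univ, (∑ q, if p = j then if q = k then c j k * t ^ 2 else 0 else 0) =
        (if p = j then c j k * t ^ 2 else 0) := by
      intro p _; split_ifs with h <;> simp [h, Finset.sum_ite_eq']
    rw [Finset.sum_congr rfl e1, Finset.sum_ite_eq']
    simp
  simp only [quadPoly, h1, h2, h3]
  ring

lemma quartic_key (α β δ α' β' δ' : ℝ)
    (h : ∀ t : ℝ, (α * t + β * t ^ 2 + δ) ^ 2 = α' * t + β' * t ^ 2 + δ') : β = 0 := by
  have hb : β ^ 2 = 0 := by
    linear_combination (h 2 + h (-2) - 4 * h 1 - 4 * h (-1) + 6 * h 0) / 24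
  exact pow_eq_zero_iff (by norm_num) |>.mp hb

/-- If `q` is a quadratic polynomial and `q²` is also (expressible as) a quadratic polynomial,
then all square and cross-term coefficients of `q` vanish; hence `q` is affine. -/
theorem stmt4 {n : ℕ} (hn : 0 < n) (q : (Fin n → ℝ) → ℝ)
    (a b : Fin n → ℝ) (c : Fin n → Fin n → ℝ) (d : ℝ)
    (hq : ∀ x, q x = quadPoly a b c d x)
    (a' b' : Fin n → ℝ) (c' : Fin n → Fin n → ℝ) (d' : ℝ)
    (hq2 : ∀ x, (q x) ^ 2 = quadPoly a' b' c' d' x) :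
    (∀ j, b j = 0) ∧ (∀ j k, j < k → c j k = 0) ∧
      ∃ (a'' : Fin n → ℝ) (d'' : ℝ), ∀ x, q x = (∑ j, a'' j * x j) + d'' := by
  have hb : ∀ j, b j = 0 := by
    intro j
    apply quartic_key (a j) (b j) d (a' j) (b' j) d'
    intro t
    have h := hq2 (fun i => if i = j then t else 0)
    rw [hq, single_eval, single_eval] at h
    exact h
  have hc : ∀ j k, j < k → c j k = 0 := by
    intro j k hjk
    have key := quartic_key (a j + a k) (b j + b k + c j k) d
      (a' j + a' k) (b' j + b' k + c' j k) d' (fun t => by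
        have h := hq2 (fun i => if i = j then t else if i = k then t else 0)
        rw [hq, pair_eval _ _ _ _ _ _ hjk, pair_eval _ _ _ _ _ _ hjk] at h
        linear_combination h)
    have hbj := hb j; have hbk := hb k
    linarith
  refine ⟨hb, hc, a, d, fun x => ?_⟩
  rw [hq]
  have hz : (∑ j, b j * x j ^ 2) = 0 := by
    apply Finset.sum_eq_zero; intro j _; simp [hb j]
  have hz2 : (∑ j, ∑ k, if j < k then c j k * x j * x k else 0) = 0 := by
    apply Finset.sum_eq_zero; intro p _; apply Finset.sum_eq_zero; intro r _
    split_ifs with h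
    · simp [hc p r h]
    · rfl
  simp [quadPoly, hz, hz2]
end

section
/- Let n be a positive integer. Suppose A, B, D, E are n×n real matrices and c, f ∈ ℝⁿ are vectors such that, defining y_i(x) = Σ_j A_{ij} x_j + Σ_j B_{ij} x_j² + c_i, the identity y_i(x)² = Σ_j D_{ij} x_j + Σ_j E_{ij} x_j² + f_i holds for every x ∈ ℝⁿ and every i. If the 2n×2n block matrix [[A, B], [D, E]] is invertible, then B = 0 and A is a generalized permutation matrix; consequently y(x) = A x + c, i.e., y is x up to a permutation with scaling and an additive constant. -/
open Matrix Finset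

private lemma sum_two {n : ℕ} (g : Fin n → ℝ) (j k : Fin n) (hjk : j ≠ k) (t u : ℝ) :
    ∑ j', g j' * (if j' = j then t else if j' = k then u else 0) = g j * t + g k * u := by
  have : ∀ j' : Fin n, g j' * (if j' = j then t else if j' = k then u else 0) =
      (if j' = j then g j * t else 0) + (if j' = k then g k * u else 0) := by
    intro j'
    split_ifs with h1 h2 <;> simp_all <;> ring
  rw [Finset.sum_congr rfl fun j' _ => this j', Finset.sum_add_distrib]
  simp

private lemma sum_one {n : ℕ} (g : Fin n → ℝ) (j : Fin n) (t : ℝ) :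
    ∑ j', g j' * (if j' = j then t else 0) = g j * t := by
  simp [mul_ite]

/-- If `y i x = Σ_j A i j * x j + Σ_j B i j * x j ² + c i` satisfies
`(y i x)² = Σ_j D i j * x j + Σ_j E i j * x j ² + f i` for every `x` and `i`, and the block
matrix `[[A, B], [D, E]]` is invertible, then `B = 0` and `A` is a generalized permutation
matrix (permutation with scaling); consequently `y x = A x + c`. -/
theorem stmt5 {n : ℕ} (hn : 0 < n) (A B D E : Matrix (Fin n) (Fin n) ℝ)
    (c f : Fin n → ℝ) (y : Fin n → (Fin n → ℝ) → ℝ)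
    (hy : ∀ (i : Fin n) (x : Fin n → ℝ),
      y i x = (∑ j, A i j * x j) + (∑ j, B i j * x j ^ 2) + c i)
    (hsq : ∀ (i : Fin n) (x : Fin n → ℝ),
      (y i x) ^ 2 = (∑ j, D i j * x j) + (∑ j, E i j * x j ^ 2) + f i)
    (hinv : IsUnit (Matrix.fromBlocks A B D E)) :
    B = 0 ∧
      (∃ (σ : Equiv.Perm (Fin n)) (s : Fin n → ℝ), (∀ i, s i ≠ 0) ∧
        ∀ i j, A i j = if j = σ i then s i else 0) ∧
      ∀ (i : Fin n) (x : Fin n → ℝ), y i x = A.mulVec x i + c i := by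
  -- single-variable evaluation
  have h1 : ∀ (i j : Fin n) (t : ℝ),
      (A i j * t + B i j * t ^ 2 + c i) ^ 2 = D i j * t + E i j * t ^ 2 + f i := by
    intro i j t
    have h := hsq i (fun j' => if j' = j then t else 0)
    rw [hy] at h
    have e1 : ∀ (g : Fin n → ℝ), ∑ j', g j' * (if j' = j then t else 0) ^ 2 = g j * t ^ 2 := by
      intro g
      have : ∀ j' : Fin n, (if j' = j then t else 0) ^ 2 = (if j' = j then t ^ 2 else 0) := by
        intro j'; split_ifs <;> simp
      rw [Finset.sum_congr rfl fun j' _ => by rw [this j']]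
      exact sum_one g j (t ^ 2)
    rw [sum_one (A i) j t, sum_one (D i) j t, e1 (B i), e1 (E i)] at h
    exact h
  have hB : B = 0 := by
    ext i j
    have h2 := h1 i j 2
    have hm2 := h1 i j (-2)
    have hp1 := h1 i j 1
    have hm1 := h1 i j (-1)
    have h0 := h1 i j 0
    have : B i j ^ 2 = 0 := by linear_combination (1/24 : ℝ) * h2 + (1/24 : ℝ) * hm2
      - (1/6 : ℝ) * hp1 - (1/6 : ℝ) * hm1 + (1/4 : ℝ) * h0
    simpa [pow_eq_zero_iff] using this
  subst hB
  -- cross terms vanish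
  have hcross : ∀ (i j k : Fin n), j ≠ k → A i j * A i k = 0 := by
    intro i j k hjk
    have h2 : ∀ t u : ℝ,
        (A i j * t + A i k * u + c i) ^ 2 =
          (D i j * t + D i k * u) + (E i j * t ^ 2 + E i k * u ^ 2) + f i := by
      intro t u
      have h := hsq i (fun j' => if j' = j then t else if j' = k then u else 0)
      rw [hy] at h
      have e1 : ∀ (g : Fin n → ℝ),
          ∑ j', g j' * (if j' = j then t else if j' = k then u else 0) ^ 2
            = g j * t ^ 2 + g k * u ^ 2 := by
        intro g
        have : ∀ j' : Fin n, (if j' = j then t else if j' = k then u else 0) ^ 2 =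
            (if j' = j then t ^ 2 else if j' = k then u ^ 2 else 0) := by
          intro j'; split_ifs <;> simp
        rw [Finset.sum_congr rfl fun j' _ => by rw [this j']]
        exact sum_two g j k hjk (t ^ 2) (u ^ 2)
      rw [sum_two (A i) j k hjk t u, sum_two (D i) j k hjk t u, e1 (E i)] at h
      simpa using h
    have h11 := h2 1 1
    have h1m := h2 1 (-1)
    have hm1 := h2 (-1) 1
    have hmm := h2 (-1) (-1)
    linear_combination (1/8 : ℝ) * h11 - (1/8 : ℝ) * h1m - (1/8 : ℝ) * hm1 + (1/8 : ℝ) * hmm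
  -- A is invertible
  have hdet : IsUnit A.det := by
    have := (Matrix.isUnit_iff_isUnit_det _).mp hinv
    rw [Matrix.det_fromBlocks_zero₁₂] at this
    exact isUnit_of_mul_isUnit_left this
  have hAinv : A * A⁻¹ = 1 := Matrix.mul_nonsing_inv A hdet
  -- each row has a nonzero entry
  have hex : ∀ i : Fin n, ∃ j, A i j ≠ 0 := by
    intro i
    by_contra hc
    push_neg at hc
    have h1 : (A * A⁻¹) i i = 1 := by rw [hAinv]; simp
    rw [Matrix.mul_apply] at h1
    simp [hc] at h1
  classical
  set σ0 : Fin n → Fin n := fun i => Classical.choose (hex i) with hσ0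
  have hσne : ∀ i, A i (σ0 i) ≠ 0 := fun i => Classical.choose_spec (hex i)
  have hzero : ∀ i j, j ≠ σ0 i → A i j = 0 := by
    intro i j hj
    have := hcross i j (σ0 i) hj
    rcases mul_eq_zero.mp this with h | h
    · exact h
    · exact absurd h (hσne i)
  have hrow : ∀ i i' : Fin n, (A * A⁻¹) i i' = A i (σ0 i) * A⁻¹ (σ0 i) i' := by
    intro i i'
    rw [Matrix.mul_apply]
    rw [Finset.sum_eq_single (σ0 i)]
    · intro b _ hb; rw [hzero i b hb]; ring
    · intro h; exact absurd (Finset.mem_univ _) h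
  have hinj : Function.Injective σ0 := by
    intro i1 i2 h12
    by_contra hne
    have e1 : A i1 (σ0 i1) * A⁻¹ (σ0 i1) i2 = 0 := by
      rw [← hrow, hAinv]; simp [Matrix.one_apply, hne]
    have e2 : A i2 (σ0 i2) * A⁻¹ (σ0 i2) i2 = 1 := by
      rw [← hrow, hAinv]; simp
    rcases mul_eq_zero.mp e1 with h | h
    · exact hσne i1 h
    · rw [h12] at h; rw [h, mul_zero] at e2; exact zero_ne_one e2
  refine ⟨rfl, ⟨Equiv.ofBijective σ0 (Finite.injective_iff_bijective.mp hinj),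
      fun i => A i (σ0 i), hσne, ?_⟩, ?_⟩
  · intro i j
    simp only [Equiv.ofBijective_apply]
    split_ifs with h
    · rw [h]
    · exact hzero i j h
  · intro i x
    rw [hy]
    simp [Matrix.mulVec, dotProduct]
end
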